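/- arXiv:1506.00298 — 2 statements merged into one kernel-verified Lean document; each statement's English description precedes it below -/
import Mathlib

section
/- The ℚ-algebra homomorphism ℚ[h,k] → ℚ[h,ξ]/⟨h³, h²+hξ+ξ²⟩ sending h ↦ h and k ↦ h+ξ descends to a ℚ-algebra isomorphism ℚ[h,k]/⟨k³, h²−hk+k²⟩ ≅ ℚ[h,ξ]/⟨h³, h²+hξ+ξ²⟩. (These are the two presentations of the Chow ring of the full flag variety Fl(V) of a 3-dimensional vector space V, coming from its two projective-bundle structures.) -/
open MvPolynomial

noncomputable section

/-- Variables of ℚ[h,ξ]: `X 0 = h`, `X 1 = ξ`. -/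
abbrev PFl := MvPolynomial (Fin 2) ℚ

/-- The ideal ⟨h³, h²+hξ+ξ²⟩. -/
def JFl : Ideal PFl := Ideal.span {X 0 ^ 3, X 0 ^ 2 + X 0 * X 1 + X 1 ^ 2}

/-- The Chow ring ℚ[h,ξ]/⟨h³, h²+hξ+ξ²⟩ of the full flag variety Fl(V). -/
abbrev RFl := PFl ⧸ JFl

/-- Variables of ℚ[h,k]: `X 0 = h`, `X 1 = k`.  The ideal ⟨k³, h²−hk+k²⟩. -/
def Jhk : Ideal (MvPolynomial (Fin 2) ℚ) :=
  Ideal.span {X 1 ^ 3, X 0 ^ 2 - X 0 * X 1 + X 1 ^ 2}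

/-- The homomorphism ℚ[h,k] → ℚ[h,ξ]/⟨h³, h²+hξ+ξ²⟩ sending h ↦ h and k ↦ h+ξ. -/
def φ : MvPolynomial (Fin 2) ℚ →ₐ[ℚ] RFl :=
  aeval fun i => Ideal.Quotient.mk JFl (![X 0, X 0 + X 1] i)

/-- The homomorphism the other way: h ↦ h, ξ ↦ k − h. -/
def ψ : PFl →ₐ[ℚ] (MvPolynomial (Fin 2) ℚ ⧸ Jhk) :=
  aeval fun i => Ideal.Quotient.mk Jhk (![X 0, X 1 - X 0] i)

lemma φ_apply (p : MvPolynomial (Fin 2) ℚ) :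
    φ p = Ideal.Quotient.mk JFl (aeval ![X 0, X 0 + X 1] p) := by
  rw [φ]
  simpa using (comp_aeval_apply (f := ![X 0, X 0 + X 1]) (Ideal.Quotient.mkₐ ℚ JFl) p).symm

lemma ψ_apply (p : PFl) :
    ψ p = Ideal.Quotient.mk Jhk (aeval ![X 0, X 1 - X 0] p) := by
  rw [ψ]
  simpa using (comp_aeval_apply (f := ![X 0, X 1 - X 0]) (Ideal.Quotient.mkₐ ℚ Jhk) p).symm

lemma hker : Jhk ≤ RingHom.ker φ := by
  rw [Jhk, Ideal.span_le]
  rintro p (rfl | rfl) <;>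
    rw [SetLike.mem_coe, RingHom.mem_ker, φ_apply, Ideal.Quotient.eq_zero_iff_mem, JFl,
      Ideal.mem_span_pair] <;>
    simp only [map_pow, map_sub, map_add, map_mul, aeval_X, Matrix.cons_val_zero,
      Matrix.cons_val_one, Matrix.head_cons]
  · exact ⟨-1, 2 * X 0 + X 1, by ring⟩
  · exact ⟨0, 1, by ring⟩

lemma hker' : JFl ≤ RingHom.ker ψ := by
  rw [JFl, Ideal.span_le]
  rintro p (rfl | rfl) <;>
    rw [SetLike.mem_coe, RingHom.mem_ker, ψ_apply, Ideal.Quotient.eq_zero_iff_mem, Jhk,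
      Ideal.mem_span_pair] <;>
    simp only [map_pow, map_sub, map_add, map_mul, aeval_X, Matrix.cons_val_zero,
      Matrix.cons_val_one, Matrix.head_cons]
  · exact ⟨-1, X 0 + X 1, by ring⟩
  · exact ⟨0, 1, by ring⟩

def Φ : (MvPolynomial (Fin 2) ℚ ⧸ Jhk) →ₐ[ℚ] RFl :=
  Ideal.Quotient.liftₐ Jhk φ fun a ha => hker ha

def Ψ : RFl →ₐ[ℚ] (MvPolynomial (Fin 2) ℚ ⧸ Jhk) :=
  Ideal.Quotient.liftₐ JFl ψ fun a ha => hker' ha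

lemma Φ_mk (p : MvPolynomial (Fin 2) ℚ) : Φ (Ideal.Quotient.mk Jhk p) = φ p := by
  exact AlgHom.congr_fun (Ideal.Quotient.liftₐ_comp Jhk φ fun a ha => hker ha) p

lemma Ψ_mk (p : PFl) : Ψ (Ideal.Quotient.mk JFl p) = ψ p := by
  exact AlgHom.congr_fun (Ideal.Quotient.liftₐ_comp JFl ψ fun a ha => hker' ha) p

lemma Φψ (p : PFl) : Φ (ψ p) = Ideal.Quotient.mk JFl p := by
  have : (Φ.comp ψ) = Ideal.Quotient.mkₐ ℚ JFl := by
    apply MvPolynomial.algHom_ext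
    intro i
    fin_cases i <;>
      simp [ψ_apply, Φ_mk, φ_apply]
  simpa using AlgHom.congr_fun this p

lemma Ψφ (p : MvPolynomial (Fin 2) ℚ) : Ψ (φ p) = Ideal.Quotient.mk Jhk p := by
  have : (Ψ.comp φ) = Ideal.Quotient.mkₐ ℚ Jhk := by
    apply MvPolynomial.algHom_ext
    intro i
    fin_cases i <;>
      simp [φ_apply, Ψ_mk, ψ_apply]
  simpa using AlgHom.congr_fun this p

def eIso : (MvPolynomial (Fin 2) ℚ ⧸ Jhk) ≃ₐ[ℚ] RFl :=
  AlgEquiv.ofAlgHom Φ Ψ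
    (by
      apply AlgHom.ext
      intro x
      obtain ⟨p, rfl⟩ := Ideal.Quotient.mk_surjective x
      simp only [AlgHom.comp_apply, AlgHom.id_apply]
      rw [Ψ_mk, Φψ])
    (by
      apply AlgHom.ext
      intro x
      obtain ⟨p, rfl⟩ := Ideal.Quotient.mk_surjective x
      simp only [AlgHom.comp_apply, AlgHom.id_apply]
      rw [Φ_mk, Ψφ])

/-- φ kills ⟨k³, h²−hk+k²⟩ and descends to a ℚ-algebra isomorphism
ℚ[h,k]/⟨k³, h²−hk+k²⟩ ≅ ℚ[h,ξ]/⟨h³, h²+hξ+ξ²⟩. -/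
theorem flag_variety_presentations :
    Jhk ≤ RingHom.ker φ ∧
    ∃ e : (MvPolynomial (Fin 2) ℚ ⧸ Jhk) ≃ₐ[ℚ] RFl,
      ∀ p : MvPolynomial (Fin 2) ℚ, e (Ideal.Quotient.mk Jhk p) = φ p := by
  exact ⟨hker, eIso, fun p => Φ_mk p⟩
end
end

section
/- The graded ℚ-algebra ℚ[ρ,b₁,b₂,d₂]/(I_Q + ⟨b₂−d₂, b₁²−3d₂, d₂−b₁ρ+3ρ², b₁b₂, d₂²⟩) has Hilbert series 1 + 2t + 2t² + t³: its homogeneous components have ℚ-dimensions 1, 2, 2, 1 in degrees 0, 1, 2, 3 respectively, and 0 in all degrees greater than 3. -/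
open MvPolynomial

noncomputable section

/-- Variables of ℚ[ρ,b₁,b₂,d₂]: `X 0 = ρ`, `X 1 = b₁`, `X 2 = b₂`, `X 3 = d₂`. -/
abbrev PQ := MvPolynomial (Fin 4) ℚ

/-- The ideal I_Q presenting the Chow ring of Q = ℙ(U). -/
def IQ : Ideal PQ := Ideal.span
  { X 1 ^ 2 * X 3 - 3 * X 3 ^ 2,
    X 1 ^ 2 * X 2 - X 2 * X 3 - 3 * X 3 ^ 2,
    X 1 ^ 4 + 3 * X 2 ^ 2 - 9 * X 2 * X 3 - 3 * X 3 ^ 2,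
    2 * X 1 * X 2 * X 3 - 3 * X 1 * X 3 ^ 2,
    3 * X 1 * X 2 ^ 2 - 7 * X 1 * X 3 ^ 2,
    X 0 ^ 12 + 3 * X 0 ^ 11 * X 1 + 3 * X 0 ^ 10 * (X 1 ^ 2 + 2 * X 2 - X 3)
      + X 0 ^ 9 * (-X 1 ^ 3 + 12 * X 1 * X 2 + 2 * X 1 * X 3)
      + 3 * X 0 ^ 8 * (9 * X 2 ^ 2 - 16 * X 2 * X 3 + 17 * X 3 ^ 2)
      + 28 * X 0 ^ 7 * X 1 * X 3 ^ 2 + 56 * X 0 ^ 6 * X 3 ^ 3 }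

/-- The extra generators b₂−d₂, b₁²−3d₂, d₂−b₁ρ+3ρ², b₁b₂, d₂². -/
def K : Set PQ :=
  { X 2 - X 3, X 1 ^ 2 - 3 * X 3, X 3 - X 1 * X 0 + 3 * X 0 ^ 2, X 1 * X 2, X 3 ^ 2 }

/-- The full ideal I_Q + ⟨b₂−d₂, b₁²−3d₂, d₂−b₁ρ+3ρ², b₁b₂, d₂²⟩. -/
def Itot : Ideal PQ := IQ ⊔ Ideal.span K

/-- The grading weights: deg ρ = deg b₁ = 1, deg b₂ = deg d₂ = 2. -/
def w : Fin 4 → ℕ := ![1, 1, 2, 2]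

/-- The degree-`i` homogeneous component of ℚ[ρ,b₁,b₂,d₂]/(I_Q + ⟨…⟩). -/
def component (i : ℕ) : Submodule ℚ (PQ ⧸ Itot) :=
  (weightedHomogeneousSubmodule ℚ w i).map (Ideal.Quotient.mkₐ ℚ Itot).toLinearMap

/-!
Modulo the extra generators, `b₂ = d₂ = b₁ρ - 3ρ²` and `b₁² = 3b₁ρ - 9ρ²`, and then
`0 = b₁b₂ = -9ρ³`. Hence the degree-`i` part of the quotient is spanned by the monomials
`ρ^p b₁^q` with `p < 3`, `q < 2`, `p + q = i`. These six monomials are linearly independent: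
they map to a basis of the model `ℚ[ρ, b₁]/(ρ³, b₁² - 3b₁ρ + 9ρ²)`, in which all of `I_Q`
vanishes because each of its generators lies in `(ρ³, b₁d₂, d₂², b₁³)` with `d₂ = b₁ρ - 3ρ²`.
-/

theorem MvPolynomial.IsWeightedHomogeneous.aeval_mem {σ R S ι : Type*} [CommSemiring R]
    [CommSemiring S] [Algebra R S] [AddCommMonoid ι] (𝒜 : ι → Submodule R S)
    [SetLike.GradedMonoid 𝒜] {w : σ → ι} {x : σ → S} (hx : ∀ i, x i ∈ 𝒜 (w i)) {m : ι}
    {p : MvPolynomial σ R} (hp : p.IsWeightedHomogeneous w m) : aeval x p ∈ 𝒜 m := by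
  induction hp using IsWeightedHomogeneous.induction_on with
  | zero => simp
  | add p q _ _ hp hq => rw [map_add]; exact add_mem hp hq
  | monomial d r hd =>
    rw [aeval_monomial, ← Algebra.smul_def, ← hd, Finsupp.weight_apply]
    exact Submodule.smul_mem _ _ (SetLike.prod_pow_mem_graded 𝒜 w x d fun i _ => hx i)

namespace Itot

open Ideal.Quotient Submodule

def ρ : PQ ⧸ Itot := mk Itot (X 0)
def b₁ : PQ ⧸ Itot := mk Itot (X 1)

lemma mk_X0 : mk Itot (X 0) = ρ := rfl
lemma mk_X1 : mk Itot (X 1) = b₁ := rfl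

lemma mk_eq_zero_of_mem_K {p : PQ} (hp : p ∈ K) : mk Itot p = 0 :=
  eq_zero_iff_mem.2 (le_sup_right (a := IQ) (Ideal.subset_span hp))

lemma mk_X3 : mk Itot (X 3) = b₁ * ρ - 3 * ρ ^ 2 := by
  have h := mk_eq_zero_of_mem_K (p := X 3 - X 1 * X 0 + 3 * X 0 ^ 2) (by simp [K])
  simp only [map_add, map_sub, map_mul, map_pow, map_ofNat, mk_X0, mk_X1] at h
  linear_combination h

lemma mk_X2 : mk Itot (X 2) = mk Itot (X 3) := by
  rw [← sub_eq_zero, ← map_sub]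
  exact mk_eq_zero_of_mem_K (by simp [K])

lemma b₁_sq : b₁ ^ 2 = 3 * b₁ * ρ - 9 * ρ ^ 2 := by
  have h := mk_eq_zero_of_mem_K (p := X 1 ^ 2 - 3 * X 3) (by simp [K])
  simp only [map_sub, map_mul, map_pow, map_ofNat, mk_X1, mk_X3] at h
  linear_combination h

lemma ρ_cube : ρ ^ 3 = 0 := by
  have h := mk_eq_zero_of_mem_K (p := X 1 * X 2) (by simp [K])
  rw [map_mul, mk_X1, mk_X2, mk_X3] at h
  have h9 : (9 : PQ ⧸ Itot) * ρ ^ 3 = 0 := by linear_combination ρ * b₁_sq - h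
  have hunit : IsUnit (9 : PQ ⧸ Itot) := by
    rw [← map_ofNat (algebraMap ℚ (PQ ⧸ Itot)) 9]
    exact (IsUnit.mk0 _ (by norm_num)).map _
  exact hunit.mul_right_eq_zero.1 h9

def stdMonomial (pq : Fin 3 × Fin 2) : PQ ⧸ Itot := ρ ^ (pq.1 : ℕ) * b₁ ^ (pq.2 : ℕ)

def grade (i : ℕ) : Submodule ℚ (PQ ⧸ Itot) :=
  span ℚ (stdMonomial '' {pq | (pq.1 : ℕ) + pq.2 = i})

lemma grade_eq_bot {i : ℕ} (hi : 3 < i) : grade i = ⊥ := by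
  rw [grade, span_eq_bot]
  rintro _ ⟨⟨p, q⟩, hpq, rfl⟩
  have := p.isLt
  have := q.isLt
  simp only [Set.mem_ofPred_eq] at hpq
  omega

lemma ρ_pow_mul_b₁_pow_mem_grade (n m : ℕ) : ρ ^ n * b₁ ^ m ∈ grade (n + m) := by
  induction m using Nat.strong_induction_on generalizing n with
  | _ m ih =>
  rcases lt_or_ge m 2 with hm | hm
  · rcases lt_or_ge n 3 with hn | hn
    · exact subset_span ⟨(⟨n, hn⟩, ⟨m, hm⟩), rfl, rfl⟩
    · rw [pow_eq_zero_of_le hn ρ_cube, zero_mul]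
      exact zero_mem _
  · obtain ⟨m, rfl⟩ := Nat.exists_eq_add_of_le' hm
    have h : ρ ^ n * b₁ ^ (m + 2) =
        3 • (ρ ^ (n + 1) * b₁ ^ (m + 1)) - 9 • (ρ ^ (n + 2) * b₁ ^ m) := by
      simp only [nsmul_eq_mul, Nat.cast_ofNat]
      linear_combination ρ ^ n * b₁ ^ m * b₁_sq
    rw [h]
    refine sub_mem (nsmul_mem ?_ 3) (nsmul_mem ?_ 9)
    · convert ih (m + 1) (by omega) (n + 1) using 2; omega
    · convert ih m (by omega) (n + 2) using 2; omega

instance : SetLike.GradedMonoid grade where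
  one_mem := by simpa using ρ_pow_mul_b₁_pow_mem_grade 0 0
  mul_mem i j x y hx hy := by
    refine (span_mul_span ℚ _ _).le.trans (span_le.2 ?_) (mul_mem_mul hx hy)
    rintro _ ⟨_, ⟨pq, rfl, rfl⟩, _, ⟨pq', rfl, rfl⟩, rfl⟩
    simp only [SetLike.mem_coe, stdMonomial]
    rw [add_add_add_comm, mul_mul_mul_comm, ← pow_add, ← pow_add]
    exact ρ_pow_mul_b₁_pow_mem_grade _ _

lemma mk_X3_mem_grade : mk Itot (X 3) ∈ grade 2 := by
  have h₁₁ := ρ_pow_mul_b₁_pow_mem_grade 1 1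
  have h₂₀ := ρ_pow_mul_b₁_pow_mem_grade 2 0
  rw [pow_one, pow_one, mul_comm] at h₁₁
  rw [pow_zero, mul_one] at h₂₀
  simpa [mk_X3] using sub_mem h₁₁ (nsmul_mem h₂₀ 3)

lemma mk_mem_grade {i : ℕ} {p : PQ} (hp : p ∈ weightedHomogeneousSubmodule ℚ w i) :
    mk Itot p ∈ grade i := by
  rw [← Ideal.Quotient.mkₐ_eq_mk ℚ, aeval_unique (Ideal.Quotient.mkₐ ℚ Itot)]
  refine hp.aeval_mem grade fun j => ?_
  fin_cases j
  · exact subset_span ⟨(1, 0), rfl, by simp [stdMonomial, ρ]⟩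
  · exact subset_span ⟨(0, 1), rfl, by simp [stdMonomial, b₁]⟩
  · simpa [mk_X2, w] using mk_X3_mem_grade
  · simpa [w] using mk_X3_mem_grade

lemma component_eq_grade (i : ℕ) : component i = grade i := by
  refine le_antisymm (map_le_iff_le_comap.2 fun p hp => mk_mem_grade hp) (span_le.2 ?_)
  rintro _ ⟨⟨p, q⟩, rfl, rfl⟩
  refine ⟨X 0 ^ (p : ℕ) * X 1 ^ (q : ℕ), ?_, by simp [stdMonomial, ρ, b₁]⟩
  simpa [w] using
    ((isWeightedHomogeneous_X ℚ w 0).pow p).mul ((isWeightedHomogeneous_X ℚ w 1).pow q)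

end Itot

abbrev ModelBase : Type := AdjoinRoot (Polynomial.X ^ 3 : Polynomial ℚ)

namespace ModelBase

def ρ : ModelBase := AdjoinRoot.root _

lemma ρ_cube : ρ ^ 3 = 0 := by
  rw [ρ, ← AdjoinRoot.mk_X, ← map_pow, AdjoinRoot.mk_self]

instance : Nontrivial ModelBase := AdjoinRoot.nontrivial _ (by simp)

def basis : Module.Basis (Fin 3) ℚ ModelBase :=
  (AdjoinRoot.powerBasis' (Polynomial.monic_X_pow 3)).basis.reindex
    (finCongr (Polynomial.natDegree_X_pow 3))

lemma basis_apply (i : Fin 3) : basis i = ρ ^ (i : ℕ) := by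
  simp only [basis, Module.Basis.coe_reindex, PowerBasis.coe_basis, AdjoinRoot.powerBasis'_gen,
    Function.comp_apply, ρ]
  rfl

def relation : Polynomial ModelBase :=
  .X ^ 2 - .C (3 * ρ) * .X + .C (9 * ρ ^ 2)

lemma relation_monic : relation.Monic := by unfold relation; monicity!

lemma relation_natDegree : relation.natDegree = 2 := by unfold relation; compute_degree!

end ModelBase

/-- `ℚ[ρ, b₁]/(ρ³, b₁² - 3b₁ρ + 9ρ²)`, built as a tower of two `AdjoinRoot`s so that it is
visibly free of rank 6. -/
abbrev Model : Type := AdjoinRoot ModelBase.relation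

namespace Model

open ModelBase (relation relation_monic relation_natDegree)

def ρ : Model := AdjoinRoot.of relation ModelBase.ρ
def b₁ : Model := AdjoinRoot.root relation

lemma ρ_cube : ρ ^ 3 = 0 := by rw [ρ, ← map_pow, ModelBase.ρ_cube, map_zero]

lemma b₁_sq : b₁ ^ 2 = 3 * b₁ * ρ - 9 * ρ ^ 2 := by
  have h : AdjoinRoot.mk relation
      (.X ^ 2 - .C (3 * ModelBase.ρ) * .X + .C (9 * ModelBase.ρ ^ 2)) = 0 :=
    AdjoinRoot.mk_self
  simp only [map_add, map_sub, map_mul, map_pow, map_ofNat, AdjoinRoot.mk_X, AdjoinRoot.mk_C] at h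
  rw [b₁, ρ]
  linear_combination h

def basis : Module.Basis (Fin 3 × Fin 2) ℚ Model :=
  ModelBase.basis.smulTower
    ((AdjoinRoot.powerBasis' relation_monic).basis.reindex (finCongr relation_natDegree))

lemma basis_apply (ij : Fin 3 × Fin 2) : basis ij = ρ ^ (ij.1 : ℕ) * b₁ ^ (ij.2 : ℕ) := by
  rw [basis, Module.Basis.smulTower_apply, ModelBase.basis_apply, Algebra.smul_def]
  simp only [AdjoinRoot.algebraMap_eq, map_pow, Module.Basis.coe_reindex, PowerBasis.coe_basis,
    AdjoinRoot.powerBasis'_gen, Function.comp_apply, ρ, b₁]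
  rfl

def d₂ : Model := b₁ * ρ - 3 * ρ ^ 2

lemma b₁_mul_d₂ : b₁ * d₂ = 0 := by
  unfold d₂; linear_combination ρ * b₁_sq - 9 * ρ_cube

lemma d₂_sq : d₂ ^ 2 = 0 := by
  unfold d₂; linear_combination ρ ^ 2 * b₁_sq - 3 * b₁ * ρ_cube

lemma b₁_cube : b₁ ^ 3 = 0 := by
  linear_combination (b₁ + 3 * ρ) * b₁_sq - 27 * ρ_cube

def eval : PQ →ₐ[ℚ] Model := aeval ![ρ, b₁, d₂, d₂]

lemma Itot_le_ker_eval : Itot ≤ RingHom.ker eval := by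
  have hρ : ∀ n, 3 ≤ n → ρ ^ n = 0 := fun n hn => pow_eq_zero_of_le hn ρ_cube
  simp only [Itot, IQ, K, sup_le_iff, Ideal.span_le, Set.insert_subset_iff,
    Set.singleton_subset_iff, SetLike.mem_coe, RingHom.mem_ker, eval, map_add, map_sub, map_neg,
    map_mul, map_pow, aeval_X, aeval_ofNat, Matrix.cons_val, sub_self, true_and]
  refine ⟨⟨?_, ?_, ?_, ?_, ?_, ?_⟩, ?_, ?_, b₁_mul_d₂, d₂_sq⟩
  · linear_combination b₁ * b₁_mul_d₂ - 3 * d₂_sq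
  · linear_combination b₁ * b₁_mul_d₂ - 4 * d₂_sq
  · linear_combination b₁ * b₁_cube - 9 * d₂_sq
  · linear_combination -b₁ * d₂_sq
  · linear_combination -4 * b₁ * d₂_sq
  · simp [hρ]
  · unfold d₂; linear_combination b₁_sq
  · unfold d₂; ring

def ofQuotient : PQ ⧸ Itot →ₐ[ℚ] Model :=
  Ideal.Quotient.liftₐ Itot eval fun _ hp => Itot_le_ker_eval hp

lemma ofQuotient_mk (p : PQ) : ofQuotient (Ideal.Quotient.mk Itot p) = eval p := rfl

lemma ofQuotient_stdMonomial (pq : Fin 3 × Fin 2) :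
    ofQuotient (Itot.stdMonomial pq) = basis pq := by
  simp [Itot.stdMonomial, basis_apply, Itot.ρ, Itot.b₁, ofQuotient_mk, eval]

end Model

namespace Itot

lemma linearIndependent_stdMonomial : LinearIndependent ℚ stdMonomial := by
  refine .of_comp Model.ofQuotient.toLinearMap ?_
  convert Model.basis.linearIndependent
  exact funext Model.ofQuotient_stdMonomial

lemma finrank_grade (i : ℕ) :
    Module.finrank ℚ (grade i) = Fintype.card {pq : Fin 3 × Fin 2 // (pq.1 : ℕ) + pq.2 = i} := by
  rw [grade, Set.image_eq_range]
  exact finrank_span_eq_card (linearIndependent_stdMonomial.comp _ Subtype.val_injective)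

end Itot

/-- The Hilbert series of ℚ[ρ,b₁,b₂,d₂]/(I_Q + ⟨b₂−d₂, b₁²−3d₂, d₂−b₁ρ+3ρ², b₁b₂, d₂²⟩)
is 1 + 2t + 2t² + t³. -/
theorem hilbert_series_quotient :
    (∀ i : ℕ, Module.finrank ℚ (component i) = [1, 2, 2, 1].getD i 0) ∧
    ∀ i : ℕ, 3 < i → component i = ⊥ := by
  have hvanish : ∀ i, 3 < i → component i = ⊥ := fun i hi => by
    rw [Itot.component_eq_grade, Itot.grade_eq_bot hi]
  refine ⟨fun i => ?_, hvanish⟩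
  rcases lt_or_ge 3 i with hi | hi
  · rw [hvanish i hi, finrank_bot, List.getD_eq_default _ _ (by simp; omega)]
  · rw [Itot.component_eq_grade, Itot.finrank_grade]
    interval_cases i <;> decide
end
end
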